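/- arXiv:1412.2849 — 8 statements merged into one kernel-verified Lean document; each statement's English description precedes it below -/
import Mathlib

section
/- For a positive integer n, the dual lattice O* of O_{n²} with respect to the trace form inside ℚ × ℚ is spanned over ℤ by f₁ = (1,0) and f₂ = (1/n, −1/n); moreover the quotient group O*/O_{n²} is isomorphic to ℤ/n²ℤ if n is odd, and to ℤ/2ℤ ⊕ ℤ/(n²/2)ℤ if n is even. -/
/-!
Pairing with `(1, 1)` and `(0, n)`, which lie in `O = O_{n²}`, shows that `v ∈ O*` forces
`v₁ + v₂ ∈ ℤ` and `n v₂ ∈ ℤ`, i.e. `v = a f₁ + b f₂` with `a, b ∈ ℤ`; conversely such `v` pair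
integrally with `O`. In the coordinates `(a, b)` the lattice `O` becomes
`{(a, n c) : n ∣ a + 2c}`, spanned by `(n, 0)` and `(-2, n)`, whose Smith normal form is
`diag(gcd(n, 2), n² / gcd(n, 2))`. Concretely, `O` is the kernel of the surjection
`(a, b) ↦ n a + (n + 2) b mod n²` for odd `n` (as `n` and `n + 2` are coprime), and of
`(a, b) ↦ (a mod 2, m a + b mod 2m²)` for `n = 2m`.
-/

namespace CongruenceLattice

lemma nonempty_quotient_addSubgroupOf_addEquiv {G P H : Type*} [AddCommGroup G] [AddCommGroup P]
    [AddCommGroup H] {A B : AddSubgroup G} (e : P ≃+ B)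
    (φ : P →+ H) (hφ : Function.Surjective φ) (hker : ∀ p, φ p = 0 ↔ (e p : G) ∈ A) :
    Nonempty (B ⧸ A.addSubgroupOf B ≃+ H) := by
  let ψ : B →+ H := φ.comp e.symm.toAddMonoidHom
  have hψ : ψ.ker = A.addSubgroupOf B := by
    ext x
    rw [AddMonoidHom.mem_ker, AddSubgroup.mem_addSubgroupOf, ← e.apply_symm_apply x]
    simp [ψ, hker]
  exact ⟨(QuotientAddGroup.quotientAddEquivOfEq hψ.symm).trans
    (QuotientAddGroup.quotientKerEquivOfSurjective ψ (hφ.comp e.symm.surjective))⟩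

lemma exists_eq_mul_and_dvd_iff_sq_dvd_of_odd {n a b : ℤ} (hn : Odd n) :
    (∃ c, b = n * c ∧ n ∣ a + 2 * c) ↔ n ^ 2 ∣ n * a + (n + 2) * b := by
  constructor
  · rintro ⟨c, rfl, hc⟩
    rw [show n * a + (n + 2) * (n * c) = n * (a + 2 * c) + n ^ 2 * c by ring, sq]
    exact dvd_add (mul_dvd_mul_left n hc) (dvd_mul_right _ _)
  · intro h
    have h2b : n ∣ 2 * b := by
      have := (dvd_pow_self n two_ne_zero).trans h
      rwa [show n * a + (n + 2) * b = n * (a + b) + 2 * b by ring,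
        dvd_add_right (dvd_mul_right _ _)] at this
    obtain ⟨c, rfl⟩ := (Int.isCoprime_two_right.mpr hn).dvd_of_dvd_mul_left h2b
    refine ⟨c, rfl, ?_⟩
    rwa [show n * a + (n + 2) * (n * c) = n * (a + 2 * c) + n ^ 2 * c by ring,
      dvd_add_left (dvd_mul_right _ _), sq, mul_dvd_mul_iff_left (by rintro rfl; simp at hn)] at h

lemma exists_eq_mul_and_dvd_iff_of_even (m a b : ℤ) :
    (∃ c, b = 2 * m * c ∧ 2 * m ∣ a + 2 * c) ↔ 2 ∣ a ∧ 2 * m ^ 2 ∣ m * a + b := by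
  constructor
  · rintro ⟨c, rfl, k, hk⟩
    exact ⟨⟨m * k - c, by linear_combination hk⟩, ⟨k, by linear_combination m * hk⟩⟩
  · rintro ⟨⟨s, hs⟩, ⟨t, ht⟩⟩
    exact ⟨m * t - s, by linear_combination ht - m * hs, ⟨t, by linear_combination hs⟩⟩

def congruenceLattice (n : ℕ) : AddSubgroup (ℚ × ℚ) where
  carrier := {v | ∃ x y : ℤ, v = ((x : ℚ), (y : ℚ)) ∧ (n : ℤ) ∣ (x - y)}
  zero_mem' := ⟨0, 0, by simp; rfl, by simp⟩
  add_mem' := by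
    rintro _ _ ⟨x, y, rfl, hxy⟩ ⟨x', y', rfl, hxy'⟩
    exact ⟨x + x', y + y', by push_cast; rfl, sub_add_sub_comm x y x' y' ▸ dvd_add hxy hxy'⟩
  neg_mem' := by
    rintro _ ⟨x, y, rfl, hxy⟩
    exact ⟨-x, -y, by push_cast; rfl, by rw [neg_sub_neg]; exact dvd_sub_comm.mp hxy⟩

def traceDual (S : Set (ℚ × ℚ)) : AddSubgroup (ℚ × ℚ) where
  carrier := {v | ∀ w ∈ S, ∃ k : ℤ, v.1 * w.1 + v.2 * w.2 = (k : ℚ)}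
  zero_mem' _ _ := ⟨0, by simp⟩
  add_mem' := by
    intro v v' hv hv' w hw
    obtain ⟨k, hk⟩ := hv w hw
    obtain ⟨k', hk'⟩ := hv' w hw
    refine ⟨k + k', ?_⟩
    simp only [Prod.fst_add, Prod.snd_add, Int.cast_add]
    linear_combination hk + hk'
  neg_mem' := by
    intro v hv w hw
    obtain ⟨k, hk⟩ := hv w hw
    exact ⟨-k, by push_cast; simp only [Prod.fst_neg, Prod.snd_neg]; linear_combination -hk⟩

/-- `(a, b) ↦ a f₁ + b f₂` with `f₁ = (1, 0)`, `f₂ = (1/n, -1/n)`. -/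
def dualBasisMap (n : ℕ) : ℤ × ℤ →+ ℚ × ℚ :=
  (zmultiplesHom _ ((1 : ℚ), (0 : ℚ))).coprod (zmultiplesHom _ ((1 / n : ℚ), -(1 / n : ℚ)))

variable {n : ℕ}

lemma dualBasisMap_apply (p : ℤ × ℤ) :
    dualBasisMap n p = p.1 • ((1 : ℚ), (0 : ℚ)) + p.2 • ((1 / n : ℚ), -(1 / n : ℚ)) := rfl

lemma dualBasisMap_eq_mk (p : ℤ × ℤ) :
    dualBasisMap n p = ((p.1 + p.2 / n : ℚ), -(p.2 / n : ℚ)) := by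
  simp only [dualBasisMap_apply, Prod.smul_mk, Prod.mk_add_mk, zsmul_eq_mul]
  congr 1 <;> ring

lemma dualBasisMap_injective (hn : n ≠ 0) : Function.Injective (dualBasisMap n) := by
  rintro ⟨a, b⟩ ⟨a', b'⟩ h
  simp only [dualBasisMap_eq_mk, Prod.mk.injEq, neg_inj] at h
  obtain ⟨h₁, h₂⟩ := h
  have hb : (b : ℚ) = b' := by
    rwa [div_left_inj' (by exact_mod_cast hn)] at h₂
  rw [hb, add_left_inj] at h₁
  exact Prod.ext (by exact_mod_cast h₁) (by exact_mod_cast hb)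

theorem traceDual_congruenceLattice (hn : n ≠ 0) :
    traceDual (congruenceLattice n) = (dualBasisMap n).range := by
  have hnq : (n : ℚ) ≠ 0 := by exact_mod_cast hn
  ext ⟨v₁, v₂⟩
  constructor
  · intro hv
    obtain ⟨k₁, hk₁⟩ := hv (1, 1) ⟨1, 1, by norm_num, by norm_num⟩
    obtain ⟨k₂, hk₂⟩ := hv (0, n) ⟨0, n, by norm_num, by simp⟩
    simp only [mul_one, mul_zero, zero_add] at hk₁ hk₂
    refine ⟨(k₁, -k₂), ?_⟩
    rw [dualBasisMap_eq_mk]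
    push_cast
    congr 1 <;> field_simp
    · linear_combination hk₂ - (n : ℚ) * hk₁
    · linear_combination -hk₂
  · rintro ⟨⟨a, b⟩, hv⟩ w ⟨x, y, rfl, t, ht⟩
    refine ⟨a * x + b * t, ?_⟩
    rw [← hv, dualBasisMap_eq_mk]
    have hq : (x : ℚ) - y = n * t := by exact_mod_cast ht
    push_cast
    field_simp
    linear_combination (b : ℚ) * hq

lemma coe_traceDual_congruenceLattice (hn : n ≠ 0) :
    (traceDual (congruenceLattice n) : Set (ℚ × ℚ)) =
      {v | ∃ a b : ℤ, v = a • ((1 : ℚ), (0 : ℚ)) + b • ((1 / n : ℚ), -(1 / n : ℚ))} := by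
  ext v
  simp [traceDual_congruenceLattice hn, dualBasisMap_apply, eq_comm]

lemma dualBasisMap_mem_congruenceLattice_iff (hn : n ≠ 0) (p : ℤ × ℤ) :
    dualBasisMap n p ∈ congruenceLattice n ↔ ∃ c : ℤ, p.2 = n * c ∧ (n : ℤ) ∣ p.1 + 2 * c := by
  have hnq : (n : ℚ) ≠ 0 := by exact_mod_cast hn
  obtain ⟨a, b⟩ := p
  rw [dualBasisMap_eq_mk]
  constructor
  · rintro ⟨x, y, hv, hxy⟩
    simp only [Prod.mk.injEq] at hv
    obtain ⟨hx, hy⟩ := hv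
    have hb : (b : ℚ) = n * -y := by field_simp at hy; linarith
    rw [hb, mul_div_cancel_left₀ _ hnq] at hx
    refine ⟨-y, by exact_mod_cast hb, ?_⟩
    have hx' : x = a + -y := by exact_mod_cast hx.symm
    rwa [hx', show a + -y - y = a + 2 * -y by ring] at hxy
  · rintro ⟨c, rfl, hc⟩
    refine ⟨a + c, -c, ?_, by rwa [show a + c - -c = a + 2 * c by ring]⟩
    push_cast
    rw [mul_div_cancel_left₀ _ hnq]

noncomputable def dualBasisEquiv (hn : n ≠ 0) : ℤ × ℤ ≃+ traceDual (congruenceLattice n) :=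
  (AddMonoidHom.ofInjective (dualBasisMap_injective hn)).trans
    (AddEquiv.addSubgroupCongr (traceDual_congruenceLattice hn).symm)

@[simp]
lemma coe_dualBasisEquiv_apply (hn : n ≠ 0) (p : ℤ × ℤ) :
    (dualBasisEquiv hn p : ℚ × ℚ) = dualBasisMap n p := rfl

variable (n) in
abbrev discriminantGroup : Type :=
  traceDual (congruenceLattice n) ⧸
    (congruenceLattice n).addSubgroupOf (traceDual (congruenceLattice n))

theorem nonempty_discriminantGroup_addEquiv_of_odd (hn : Odd n) :
    Nonempty (discriminantGroup n ≃+ ZMod (n ^ 2)) := by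
  have hn0 : n ≠ 0 := hn.pos.ne'
  have hnz : Odd (n : ℤ) := (Int.odd_coe_nat n).mpr hn
  obtain ⟨t, ht⟩ := hn
  let φ : ℤ × ℤ →+ ZMod (n ^ 2) := AddMonoidHom.mk'
    (fun p => ((n * p.1 + (n + 2) * p.2 : ℤ) : ZMod (n ^ 2)))
    (fun p q => by simp only [Prod.fst_add, Prod.snd_add]; push_cast; ring)
  refine nonempty_quotient_addSubgroupOf_addEquiv (dualBasisEquiv hn0) φ (fun z => ?_) (fun p => ?_)
  · obtain ⟨k, rfl⟩ := ZMod.intCast_surjective z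
    -- Bézout for the coprime pair `n = 2t + 1`, `n + 2`
    refine ⟨(k * -(t + 2), k * (t + 1)), congrArg Int.cast ?_⟩
    push_cast [ht]
    ring
  · rw [coe_dualBasisEquiv_apply, dualBasisMap_mem_congruenceLattice_iff hn0,
      exists_eq_mul_and_dvd_iff_sq_dvd_of_odd hnz]
    simp only [φ, AddMonoidHom.mk'_apply, ZMod.intCast_zmod_eq_zero_iff_dvd]
    push_cast
    rfl

theorem nonempty_discriminantGroup_addEquiv_of_even (hn : n ≠ 0) (he : Even n) :
    Nonempty (discriminantGroup n ≃+ (ZMod 2 × ZMod (n ^ 2 / 2))) := by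
  obtain ⟨m, rfl⟩ := even_iff_two_dvd.mp he
  rw [show (2 * m) ^ 2 / 2 = 2 * m ^ 2 by rw [mul_pow]; omega]
  let φ : ℤ × ℤ →+ ZMod 2 × ZMod (2 * m ^ 2) := AddMonoidHom.mk'
    (fun p => ((p.1 : ZMod 2), ((m * p.1 + p.2 : ℤ) : ZMod (2 * m ^ 2))))
    (fun p q => by
      simp only [Prod.fst_add, Prod.snd_add, Prod.mk_add_mk, Prod.mk.injEq]
      push_cast
      constructor <;> ring)
  refine nonempty_quotient_addSubgroupOf_addEquiv (dualBasisEquiv hn) φ (fun z => ?_) (fun p => ?_)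
  · obtain ⟨k₁, hk₁⟩ := ZMod.intCast_surjective z.1
    obtain ⟨k₂, hk₂⟩ := ZMod.intCast_surjective z.2
    refine ⟨(k₁, k₂ - m * k₁), Prod.ext hk₁ ?_⟩
    simp [φ, ← hk₂]
  · rw [coe_dualBasisEquiv_apply, dualBasisMap_mem_congruenceLattice_iff hn]
    push_cast
    rw [exists_eq_mul_and_dvd_iff_of_even]
    simp only [φ, AddMonoidHom.mk'_apply, Prod.ext_iff, Prod.fst_zero, Prod.snd_zero,
      ZMod.intCast_zmod_eq_zero_iff_dvd]
    push_cast
    rfl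

end CongruenceLattice

open CongruenceLattice in
/-- The dual lattice `O*` of `O_{n²} = {(x,y) ∈ ℤ² : x ≡ y mod n}` with respect to
the trace form inside `ℚ × ℚ` is spanned over ℤ by `(1,0)` and `(1/n, −1/n)`;
moreover `O*/O_{n²} ≅ ℤ/n²ℤ` if `n` is odd, and `≅ ℤ/2ℤ ⊕ ℤ/(n²/2)ℤ` if `n` is even. -/
theorem dual_lattice_and_discriminant_group (n : ℕ) (hn : 0 < n) :
    ∃ OL Od : AddSubgroup (ℚ × ℚ),
      (OL : Set (ℚ × ℚ)) =
        {v | ∃ x y : ℤ, v = ((x : ℚ), (y : ℚ)) ∧ (n : ℤ) ∣ (x - y)} ∧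
      (Od : Set (ℚ × ℚ)) =
        {v | ∀ w ∈ (OL : Set (ℚ × ℚ)), ∃ k : ℤ, v.1 * w.1 + v.2 * w.2 = (k : ℚ)} ∧
      (Od : Set (ℚ × ℚ)) =
        {v | ∃ a b : ℤ, v = a • ((1 : ℚ), (0 : ℚ)) + b • ((1 / n : ℚ), -(1 / n : ℚ))} ∧
      (Odd n → Nonempty ((Od ⧸ (OL.addSubgroupOf Od)) ≃+ ZMod (n ^ 2))) ∧
      (Even n → Nonempty ((Od ⧸ (OL.addSubgroupOf Od)) ≃+ (ZMod 2 × ZMod (n ^ 2 / 2)))) :=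
  ⟨congruenceLattice n, traceDual (congruenceLattice n), rfl, rfl,
    coe_traceDual_congruenceLattice hn.ne', nonempty_discriminantGroup_addEquiv_of_odd,
    nonempty_discriminantGroup_addEquiv_of_even hn.ne'⟩
end

section
/- In the field ℚ(r,m) of rational functions in two variables, setting s = −r(8mr+36r−2m−1)/(27r+m²) and z = r(108r²−4m²r−36mr−27r+m²+m)/(27r+m²), the identity z² = −r(27s²+36rs−s−16r³+8r²−r) holds. -/
/-!
Multiplying through by `d² = (27r + m²)²`, the claim becomes, for the numerators `A = zd` and
`B = sd`, the polynomial identity `A² + r(27B² + (36r − 1)dB − r(4r − 1)²d²) = 0` in `ℚ[r,m]`.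
The only other point is that `d ≠ 0` in `ℚ(r,m)`, seen by evaluating at `r = m = 1`.
-/

open MvPolynomial

theorem Y4_eq_of_mul_denom_eq {R : Type*} [CommRing R] [NoZeroDivisors R] {r m s z : R}
    (hd : 27*r + m^2 ≠ 0)
    (hs : s * (27*r + m^2) = -r * (8*m*r + 36*r - 2*m - 1))
    (hz : z * (27*r + m^2) = r * (108*r^2 - 4*m^2*r - 36*m*r - 27*r + m^2 + m)) :
    z^2 = -r * (27*s^2 + 36*r*s - s - 16*r^3 + 8*r^2 - r) := by
  have hd2 : (27*r + m^2)^2 ≠ 0 := pow_ne_zero 2 hd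
  refine mul_right_cancel₀ hd2 ?_
  linear_combination
    (z * (27*r + m^2) + r * (108*r^2 - 4*m^2*r - 36*m*r - 27*r + m^2 + m)) * hz
    + r * (27 * (s * (27*r + m^2) - r * (8*m*r + 36*r - 2*m - 1))
      + (36*r - 1) * (27*r + m^2)) * hs

theorem twentySeven_mul_X_add_X_sq_ne_zero {σ : Type*} (i j : σ) :
    (27 * X i + X j ^ 2 : MvPolynomial σ ℚ) ≠ 0 := by
  intro h
  have := congrArg (eval fun _ => (1 : ℚ)) h
  norm_num at this

/-- In `ℚ(r,m)`, with `s = −r(8mr+36r−2m−1)/(27r+m²)` and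
`z = r(108r²−4m²r−36mr−27r+m²+m)/(27r+m²)`, the identity
`z² = −r(27s²+36rs−s−16r³+8r²−r)` holds (rational parametrization of `Y₋(4)`). -/
theorem Y4_parametrization :
    let K := FractionRing (MvPolynomial (Fin 2) ℚ)
    let r : K := algebraMap (MvPolynomial (Fin 2) ℚ) K (MvPolynomial.X 0)
    let m : K := algebraMap (MvPolynomial (Fin 2) ℚ) K (MvPolynomial.X 1)
    let s : K := -r * (8*m*r + 36*r - 2*m - 1) / (27*r + m^2)
    let z : K := r * (108*r^2 - 4*m^2*r - 36*m*r - 27*r + m^2 + m) / (27*r + m^2)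
    z^2 = -r * (27*s^2 + 36*r*s - s - 16*r^3 + 8*r^2 - r) := by
  intro K r m s z
  have hd : (27*r + m^2 : K) ≠ 0 := by
    have hmap : (27*r + m^2 : K) = algebraMap (MvPolynomial (Fin 2) ℚ) K (27 * X 0 + X 1 ^ 2) := by
      simp [r, m, map_ofNat]
    rw [hmap, Ne, IsFractionRing.to_map_eq_zero_iff]
    exact twentySeven_mul_X_add_X_sq_ne_zero 0 1
  exact Y4_eq_of_mul_denom_eq hd (div_mul_cancel₀ _ hd) (div_mul_cancel₀ _ hd)
end

section
/- In the field ℚ(m,s), setting r = −((s−1)²(2s−1)m + (54s³+27s²−72s+23))/(2(m−27)(m+27)) and z = −((s−1)²(2s−1)(m²+729) + 2(54s³+27s²−72s+23)m)/((m−27)(m+27)), the identity z² = 11664r² − 8(54s³+27s²−72s+23)r + (s−1)⁴(2s−1)² holds. -/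
/-!
Only the shape of the equation matters: for any `a`, `q` the conic `z² = 11664 r² − 8 q r + a²`
is parametrized by the given rational functions of `m`, which is a polynomial identity once the
denominator `m² − 729` is cleared. Specializing to `a = (s−1)²(2s−1)`, `q = 54s³+27s²−72s+23`
gives the theorem; the denominator does not vanish because `m` is transcendental.
-/

open MvPolynomial

theorem conic_parametrization {K : Type*} [Field K] (a q m : K) (h2 : (2 : K) ≠ 0)
    (hm : (m - 27) * (m + 27) ≠ 0) :
    (-(a * (m ^ 2 + 729) + 2 * q * m) / ((m - 27) * (m + 27))) ^ 2 =
      11664 * (-(a * m + q) / (2 * (m - 27) * (m + 27))) ^ 2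
        - 8 * q * (-(a * m + q) / (2 * (m - 27) * (m + 27))) + a ^ 2 := by
  have : m - 27 ≠ 0 := left_ne_zero_of_mul hm
  have : m + 27 ≠ 0 := right_ne_zero_of_mul hm
  field_simp
  ring

theorem MvPolynomial.X_ne_C {R σ : Type*} [CommSemiring R] [Nontrivial R] (i : σ) (c : R) :
    (X i : MvPolynomial σ R) ≠ C c := fun h => by
  simpa using congrArg totalDegree h

theorem IsFractionRing.algebraMap_X_ne_algebraMap_C {R σ K : Type*} [CommRing R] [Nontrivial R]
    [CommRing K] [Algebra (MvPolynomial σ R) K] [IsFractionRing (MvPolynomial σ R) K]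
    (i : σ) (c : R) :
    algebraMap (MvPolynomial σ R) K (X i) ≠ algebraMap (MvPolynomial σ R) K (C c) :=
  (IsFractionRing.injective _ K).ne (X_ne_C i c)

/-- In `ℚ(m,s)`, with `r = −((s−1)²(2s−1)m + (54s³+27s²−72s+23))/(2(m−27)(m+27))` and
`z = −((s−1)²(2s−1)(m²+729) + 2(54s³+27s²−72s+23)m)/((m−27)(m+27))`, the identity
`z² = 11664r² − 8(54s³+27s²−72s+23)r + (s−1)⁴(2s−1)²` holds
(rational parametrization of `Y₋(9)`). -/
theorem Y9_parametrization :
    let K := FractionRing (MvPolynomial (Fin 2) ℚ)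
    let m : K := algebraMap (MvPolynomial (Fin 2) ℚ) K (MvPolynomial.X 0)
    let s : K := algebraMap (MvPolynomial (Fin 2) ℚ) K (MvPolynomial.X 1)
    let r : K := -((s-1)^2*(2*s-1)*m + (54*s^3 + 27*s^2 - 72*s + 23)) / (2*(m-27)*(m+27))
    let z : K := -((s-1)^2*(2*s-1)*(m^2+729) + 2*(54*s^3 + 27*s^2 - 72*s + 23)*m) /
      ((m-27)*(m+27))
    z^2 = 11664*r^2 - 8*(54*s^3 + 27*s^2 - 72*s + 23)*r + (s-1)^4*(2*s-1)^2 := by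
  intro K m s r z
  have hm : (m - 27) * (m + 27) ≠ 0 := by
    refine mul_ne_zero (sub_ne_zero.mpr ?_) (add_eq_zero_iff_eq_neg.not.mpr ?_)
    · rw [show (27 : K) = algebraMap (MvPolynomial (Fin 2) ℚ) K (C 27) by
        rw [map_ofNat, map_ofNat]]
      exact IsFractionRing.algebraMap_X_ne_algebraMap_C 0 27
    · rw [show (-27 : K) = algebraMap (MvPolynomial (Fin 2) ℚ) K (C (-27)) by
        rw [map_neg, map_neg, map_ofNat, map_ofNat]]
      exact IsFractionRing.algebraMap_X_ne_algebraMap_C 0 (-27)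
  have h := conic_parametrization ((s - 1) ^ 2 * (2 * s - 1)) (54*s^3 + 27*s^2 - 72*s + 23) m
    two_ne_zero hm
  convert h using 2
  ring
end

section
/- In the rational function field ℚ(m,s), let r = −((s−1)²(2s−1)m + (54s³+27s²−72s+23))/(2(m−27)(m+27)), and let j₁ = 4(m+27)(ms²+27s²−2ms+18s+m−21)³ / ((m−27)(2ms³+54s³−5ms²+27s²+4ms−72s−m+23)) and j₂ = −2(m−27)(ms²−459s²−2ms+486s+m−123)³ / ((m+27)(2ms³+54s³−5ms²+27s²+4ms−72s−m+23)²). Then j₁·j₂ = (s⁴−4s³+6s²+432rs−4s−288r+1)³ / r³. -/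
/-!
The numerator of `r` is, up to sign, the cubic
`D = 2ms³ + 54s³ − 5ms² + 27s² + 4ms − 72s − m + 23` occurring in the denominators of `j₁` and
`j₂`, so after clearing denominators the claim is a polynomial identity in `m` and `s`. It
therefore holds for arbitrary `m, s` in any field.
-/

theorem j_invariant_product_eq {K : Type*} [Field K] {m s r : K}
    (hr : r = -((s-1)^2*(2*s-1)*m + (54*s^3 + 27*s^2 - 72*s + 23)) / (2*(m-27)*(m+27))) :
    (4*(m+27)*(m*s^2 + 27*s^2 - 2*m*s + 18*s + m - 21)^3 /
      ((m-27)*(2*m*s^3 + 54*s^3 - 5*m*s^2 + 27*s^2 + 4*m*s - 72*s - m + 23))) *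
    (-2*(m-27)*(m*s^2 - 459*s^2 - 2*m*s + 486*s + m - 123)^3 /
      ((m+27)*(2*m*s^3 + 54*s^3 - 5*m*s^2 + 27*s^2 + 4*m*s - 72*s - m + 23)^2)) =
    (s^4 - 4*s^3 + 6*s^2 + 432*r*s - 4*s - 288*r + 1)^3 / r^3 := by
  subst hr
  -- In the degenerate cases `x / 0 = 0` makes both sides vanish.
  rcases eq_or_ne (2 : K) 0 with h2 | h2
  · simp [h2]
  rcases eq_or_ne (m - 27) 0 with hm₁ | hm₁
  · simp [hm₁]
  rcases eq_or_ne (m + 27) 0 with hm₂ | hm₂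
  · simp [hm₂]
  field_simp
  ring

/-- In `ℚ(m,s)`, the product of the two `j`-invariants attached to a point of
`Y₋(9)` equals `(s⁴−4s³+6s²+432rs−4s−288r+1)³ / r³`, where
`r = −((s−1)²(2s−1)m + (54s³+27s²−72s+23))/(2(m−27)(m+27))`. -/
theorem Y9_j_invariant_product :
    let K := FractionRing (MvPolynomial (Fin 2) ℚ)
    let m : K := algebraMap (MvPolynomial (Fin 2) ℚ) K (MvPolynomial.X 0)
    let s : K := algebraMap (MvPolynomial (Fin 2) ℚ) K (MvPolynomial.X 1)
    let r : K := -((s-1)^2*(2*s-1)*m + (54*s^3 + 27*s^2 - 72*s + 23)) / (2*(m-27)*(m+27))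
    let j₁ : K := 4*(m+27)*(m*s^2 + 27*s^2 - 2*m*s + 18*s + m - 21)^3 /
      ((m-27)*(2*m*s^3 + 54*s^3 - 5*m*s^2 + 27*s^2 + 4*m*s - 72*s - m + 23))
    let j₂ : K := -2*(m-27)*(m*s^2 - 459*s^2 - 2*m*s + 486*s + m - 123)^3 /
      ((m+27)*(2*m*s^3 + 54*s^3 - 5*m*s^2 + 27*s^2 + 4*m*s - 72*s - m + 23)^2)
    j₁ * j₂ = (s^4 - 4*s^3 + 6*s^2 + 432*r*s - 4*s - 288*r + 1)^3 / r^3 := by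
  intro K m s r j₁ j₂
  exact j_invariant_product_eq rfl
end

section
/- The rational map x₁ = −882000(x−14)/(x³+420x−5600), y₁ = 49000·y·(x³−21x²−140)/(x³+420x−5600)² sends points of the genus-2 curve C: y² = (x³+420x−5600)(x³+42x²+1120) to points of the elliptic curve E: y₁² = x₁³ + 4900x₁² + 7031500x₁ + 2401000000; that is, whenever y² = (x³+420x−5600)(x³+42x²+1120) and x³+420x−5600 ≠ 0, the identity y₁² = x₁³ + 4900x₁² + 7031500x₁ + 2401000000 holds. -/
-- Both sides equal `v² Q / D³`: the left by `hy`, the right by `hcubic`.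
theorem sq_eq_cubic_of_homogenized {K : Type*} [Field K] {D Q u v y a b c : K}
    (hy : y ^ 2 = D * Q) (hD : D ≠ 0)
    (hcubic : v ^ 2 * Q = u ^ 3 + a * u ^ 2 * D + b * u * D ^ 2 + c * D ^ 3) :
    (v * y / D ^ 2) ^ 2 = (u / D) ^ 3 + a * (u / D) ^ 2 + b * (u / D) + c := by
  field_simp
  linear_combination v ^ 2 * hy + D * hcubic

/-- The rational map `x₁ = −882000(x−14)/(x³+420x−5600)`,
`y₁ = 49000·y·(x³−21x²−140)/(x³+420x−5600)²` sends points of the genus-2 curve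
`C : y² = (x³+420x−5600)(x³+42x²+1120)` to points of the elliptic curve
`E : y₁² = x₁³ + 4900x₁² + 7031500x₁ + 2401000000`. -/
theorem degree_three_map_to_elliptic_curve (x y : ℚ)
    (hC : y^2 = (x^3 + 420*x - 5600) * (x^3 + 42*x^2 + 1120))
    (hden : x^3 + 420*x - 5600 ≠ 0) :
    let x₁ : ℚ := -882000*(x - 14) / (x^3 + 420*x - 5600)
    let y₁ : ℚ := 49000*y*(x^3 - 21*x^2 - 140) / (x^3 + 420*x - 5600)^2
    y₁^2 = x₁^3 + 4900*x₁^2 + 7031500*x₁ + 2401000000 := by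
  intro x₁ y₁
  have hy₁ : y₁ = 49000 * (x^3 - 21*x^2 - 140) * y / (x^3 + 420*x - 5600)^2 := by
    simp only [y₁]; ring
  rw [hy₁]
  refine sq_eq_cubic_of_homogenized hC hden ?_
  ring
end

section
/- In ℚ(s,m), setting r = −2s(2sm−m+8s³−88s²+72s−17)/((m−4s²−22s+1)(m+4s²+22s−1)) and z = rm + s(2s−1), the identity z² = (4s²+22s−1)²r² − 2s(8s³−88s²+72s−17)r + s²(2s−1)² holds. -/
/-! The line `z = m r + s(2s - 1)` of slope `m` through the point `(0, s(2s - 1))` of the conic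
`z² = a² r² - 2 b r + c²` (with `a = 4s² + 22s - 1`, `b = s(8s³ - 88s² + 72s - 17)`,
`c = s(2s - 1)`) meets it a second time where `r (m² - a²) = -2 (m c + b)`; this is the
parametrization. Its denominator `m² - a²` is nonzero in `ℚ(s, m)` because it does not vanish at
`(s, m) = (0, 2)`. -/

theorem sq_eq_of_line_meets_conic {R : Type*} [CommRing R] {a b c m r : R}
    (hr : r * (m ^ 2 - a ^ 2) = -2 * (m * c + b)) :
    (r * m + c) ^ 2 = a ^ 2 * r ^ 2 - 2 * b * r + c ^ 2 := by
  linear_combination r * hr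

open MvPolynomial in
theorem MvPolynomial.algebraMap_ne_zero_of_eval_ne_zero {σ R K : Type*} [CommRing R]
    [CommRing K] [Algebra (MvPolynomial σ R) K] [IsFractionRing (MvPolynomial σ R) K]
    {p : MvPolynomial σ R} (x : σ → R) (hx : eval x p ≠ 0) :
    algebraMap (MvPolynomial σ R) K p ≠ 0 := by
  rw [map_ne_zero_iff _ (IsFractionRing.injective _ K)]
  rintro rfl
  exact hx (map_zero _)

/-- In `ℚ(s,m)`, with `r = −2s(2sm−m+8s³−88s²+72s−17)/((m−4s²−22s+1)(m+4s²+22s−1))`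
and `z = rm + s(2s−1)`, the identity
`z² = (4s²+22s−1)²r² − 2s(8s³−88s²+72s−17)r + s²(2s−1)²` holds
(rational parametrization of `Y₋(25)`). -/
theorem Y25_parametrization :
    let K := FractionRing (MvPolynomial (Fin 2) ℚ)
    let s : K := algebraMap (MvPolynomial (Fin 2) ℚ) K (MvPolynomial.X 0)
    let m : K := algebraMap (MvPolynomial (Fin 2) ℚ) K (MvPolynomial.X 1)
    let r : K := -2*s*(2*s*m - m + 8*s^3 - 88*s^2 + 72*s - 17) /
      ((m - 4*s^2 - 22*s + 1)*(m + 4*s^2 + 22*s - 1))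
    let z : K := r*m + s*(2*s - 1)
    z^2 = (4*s^2 + 22*s - 1)^2*r^2 - 2*s*(8*s^3 - 88*s^2 + 72*s - 17)*r
      + s^2*(2*s - 1)^2 := by
  intro K s m r z
  have hden : (m - 4*s^2 - 22*s + 1)*(m + 4*s^2 + 22*s - 1) ≠ 0 := by
    let X := @MvPolynomial.X ℚ (Fin 2) _
    have hpoly : (m - 4*s^2 - 22*s + 1)*(m + 4*s^2 + 22*s - 1) = algebraMap _ K
        ((X 1 - 4*X 0^2 - 22*X 0 + 1)*(X 1 + 4*X 0^2 + 22*X 0 - 1)) := by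
      simp only [map_mul, map_sub, map_add, map_pow, map_ofNat, map_one, s, m, X]
    rw [hpoly]
    exact MvPolynomial.algebraMap_ne_zero_of_eval_ne_zero ![0, 2] (by norm_num [X])
  have hr : r * (m^2 - (4*s^2 + 22*s - 1)^2) =
      -2 * (m * (s*(2*s - 1)) + s*(8*s^3 - 88*s^2 + 72*s - 17)) := by
    rw [div_mul_eq_mul_div, div_eq_iff hden]
    ring
  show (r*m + s*(2*s - 1))^2 = _
  linear_combination sq_eq_of_line_meets_conic hr
end

section
/- The points P = (8(3t+1)(t²−2t−1), 8(3t+1)²(t³−3t²−3t−1)) and Q = (−4t(t−1)(3t+1), 4t(3t+1)²(t²−6t−3)) satisfy the Weierstrass equation y² = x³ + 3(t²−4t−1)(3t²−4t−3)x² + 96t²(t+1)(3t+1)(t²−6t−3)x − 256t³(3t+1)²(7t³−30t²−33t−8), as identities of polynomials in ℚ[t]. -/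
open Polynomial

/-- The points `P = (8(3t+1)(t²−2t−1), 8(3t+1)²(t³−3t²−3t−1))` and
`Q = (−4t(t−1)(3t+1), 4t(3t+1)²(t²−6t−3))` satisfy the Weierstrass equation
`y² = x³ + 3(t²−4t−1)(3t²−4t−3)x² + 96t²(t+1)(3t+1)(t²−6t−3)x
  − 256t³(3t+1)²(7t³−30t²−33t−8)`, as identities in `ℚ[t]` (sections of the
elliptic K3 model of `Y₋(36)`). -/
theorem Y36_sections :
    let t : Polynomial ℚ := X
    let W : Polynomial ℚ → Polynomial ℚ := fun x =>
      x^3 + 3*(t^2 - 4*t - 1)*(3*t^2 - 4*t - 3)*x^2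
        + 96*t^2*(t+1)*(3*t+1)*(t^2 - 6*t - 3)*x
        - 256*t^3*(3*t+1)^2*(7*t^3 - 30*t^2 - 33*t - 8)
    (8*(3*t+1)^2*(t^3 - 3*t^2 - 3*t - 1))^2 = W (8*(3*t+1)*(t^2 - 2*t - 1)) ∧
    (4*t*(3*t+1)^2*(t^2 - 6*t - 3))^2 = W (-4*t*(t-1)*(3*t+1)) := by
  constructor <;> ring
end

section
/- The point P = (−4u²(3u²+26u+5), 4u²(u²+8u−4)(3u³+26u²+14u+2)) satisfies the Weierstrass equation y² = x³ + (u⁶+16u⁵+74u⁴+92u³+21u²+20u+4)x² + 8u²(10u⁵+119u⁴+324u³+291u²+68u+4)x − 16u⁴(8u⁴+84u³+139u²+12u−4), as an identity in ℚ[u]. -/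
open Polynomial

/-- The point `P = (−4u²(3u²+26u+5), 4u²(u²+8u−4)(3u³+26u²+14u+2))` satisfies the
Weierstrass equation `y² = x³ + (u⁶+16u⁵+74u⁴+92u³+21u²+20u+4)x²
+ 8u²(10u⁵+119u⁴+324u³+291u²+68u+4)x − 16u⁴(8u⁴+84u³+139u²+12u−4)`,
as an identity in `ℚ[u]` (section of the elliptic model of `Y₋(100)`). -/
theorem Y100_section :
    let u : Polynomial ℚ := X
    let x : Polynomial ℚ := -4*u^2*(3*u^2 + 26*u + 5)
    let y : Polynomial ℚ := 4*u^2*(u^2 + 8*u - 4)*(3*u^3 + 26*u^2 + 14*u + 2)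
    y^2 = x^3 + (u^6 + 16*u^5 + 74*u^4 + 92*u^3 + 21*u^2 + 20*u + 4)*x^2
      + 8*u^2*(10*u^5 + 119*u^4 + 324*u^3 + 291*u^2 + 68*u + 4)*x
      - 16*u^4*(8*u^4 + 84*u^3 + 139*u^2 + 12*u - 4) := by
  ring
end
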